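/- arXiv:2005.13852 — 4 statements merged into one kernel-verified Lean document; each statement's English description precedes it below -/
import Mathlib

section
/- In the setting of the Agmon identity, suppose F₊, F₋ : M → [0,∞) are measurable with F₊² − F₋² = V − |dφ|² − E pointwise (where T = h²U + hW + V·Id), and F := F₊ + F₋ > 0. Then for every compactly supported smooth section v: h²‖∇v‖² + ½‖F₊v‖² + ⟨v, (h²U + hW)v⟩ ≤ ‖F⁻¹ e^{φ/h}(H−E)e^{−φ/h} v‖² + (3/2)‖F₋v‖². -/
/-!
Pairing the Agmon identity with `g = F r` gives `Re⟨v, g⟩ = Re⟨F₊v + F₋v, r⟩`, which is at most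
`‖F₊v + F₋v‖ ‖r‖ ≤ ‖r‖² + (‖F₊v‖ + ‖F₋v‖)² / 4 ≤ ‖r‖² + (‖F₊v‖² + ‖F₋v‖²) / 2`.
Substituting the identity for the left-hand side and moving `‖F₊v‖² − ‖F₋v‖²` across
leaves exactly the claimed estimate.
-/

open scoped InnerProductSpace

theorem mul_le_sq_add_sq_div_four (a b : ℝ) : a * b ≤ b ^ 2 + a ^ 2 / 4 := by
  nlinarith [sq_nonneg (a - 2 * b)]

theorem add_sq_div_four_le (a b : ℝ) : (a + b) ^ 2 / 4 ≤ (a ^ 2 + b ^ 2) / 2 := by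
  nlinarith [sq_nonneg (a - b)]

theorem re_inner_add_le_norm_sq_add {𝕜 E : Type*} [RCLike 𝕜] [NormedAddCommGroup E]
    [InnerProductSpace 𝕜 E] (x y r : E) :
    RCLike.re ⟪x + y, r⟫_𝕜 ≤ ‖r‖ ^ 2 + (‖x‖ ^ 2 + ‖y‖ ^ 2) / 2 :=
  calc RCLike.re ⟪x + y, r⟫_𝕜
      ≤ ‖x + y‖ * ‖r‖ := re_inner_le_norm _ _
    _ ≤ (‖x‖ + ‖y‖) * ‖r‖ := by gcongr; exact norm_add_le x y
    _ ≤ ‖r‖ ^ 2 + (‖x‖ + ‖y‖) ^ 2 / 4 := mul_le_sq_add_sq_div_four _ _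
    _ ≤ ‖r‖ ^ 2 + (‖x‖ ^ 2 + ‖y‖ ^ 2) / 2 := by linarith [add_sq_div_four_le ‖x‖ ‖y‖]

theorem stmt_7_general
    {V P : Type*} [NormedAddCommGroup V] [InnerProductSpace ℂ V]
    [NormedAddCommGroup P] [InnerProductSpace ℂ P]
    (h : ℝ)
    (grad : V →ₗ[ℂ] P)
    (MU : V →ₗ[ℂ] V)
    (MFp MFm MF : V →ₗ[ℂ] V)
    (v g r : V)
    (hsum : MF = MFp + MFm)
    (hMFsym : ⟪v, MF r⟫_ℂ = ⟪MF v, r⟫_ℂ)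
    (hr : MF r = g)
    (hAgmon : (⟪v, g⟫_ℂ).re
        = h ^ 2 * ‖grad v‖ ^ 2 + (⟪v, MU v⟫_ℂ).re + ‖MFp v‖ ^ 2 - ‖MFm v‖ ^ 2) :
    h ^ 2 * ‖grad v‖ ^ 2 + (1 / 2) * ‖MFp v‖ ^ 2 + (⟪v, MU v⟫_ℂ).re
      ≤ ‖r‖ ^ 2 + (3 / 2) * ‖MFm v‖ ^ 2 := by
  have hpair : ⟪v, g⟫_ℂ = ⟪MFp v + MFm v, r⟫_ℂ := by
    rw [← hr, hMFsym, hsum, LinearMap.add_apply]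
  have hbound : (⟪v, g⟫_ℂ).re ≤ ‖r‖ ^ 2 + (‖MFp v‖ ^ 2 + ‖MFm v‖ ^ 2) / 2 :=
    hpair ▸ re_inner_add_le_norm_sq_add (𝕜 := ℂ) (MFp v) (MFm v) r
  linarith

/-- **Agmon estimate.**  In the setting of the Agmon identity for
`H = h²∇*∇ + h²U + hW + V·Id`, suppose `F₊, F₋ ≥ 0` satisfy
`F₊² − F₋² = V − |dφ|² − E` pointwise and `F = F₊ + F₋ > 0`.  Then for every compactly
supported smooth section `v`:
`h²‖∇v‖² + ½‖F₊v‖² + ⟨v, (h²U + hW)v⟩ ≤ ‖F⁻¹e^{φ/h}(H−E)e^{−φ/h}v‖² + (3/2)‖F₋v‖²`.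
Here `MU` is the operator `h²U + hW`, `MFp`, `MFm`, `MF` are multiplication by
`F₊`, `F₋`, `F` (so `MF = MFp + MFm` and `MF` is symmetric),
`g = e^{φ/h}(H−E)e^{−φ/h}v` and `r = F⁻¹g` (so `MF r = g`), and the hypothesis `hAgmon`
is the Agmon identity
`Re⟨v, g⟩ = h²‖∇v‖² + ⟨v, (h²U + hW)v⟩ + ‖F₊v‖² − ‖F₋v‖²`. -/
theorem stmt_7
    {V P : Type*} [NormedAddCommGroup V] [InnerProductSpace ℂ V]
    [NormedAddCommGroup P] [InnerProductSpace ℂ P]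
    (h : ℝ) (hh : 0 < h)
    (grad : V →ₗ[ℂ] P)
    (MU : V →ₗ[ℂ] V)
    (MFp MFm MF : V →ₗ[ℂ] V)
    (v g r : V)
    (hsum : MF = MFp + MFm)
    (hMFsym : ⟪v, MF r⟫_ℂ = ⟪MF v, r⟫_ℂ)
    (hr : MF r = g)
    (hAgmon : (⟪v, g⟫_ℂ).re
        = h ^ 2 * ‖grad v‖ ^ 2 + (⟪v, MU v⟫_ℂ).re + ‖MFp v‖ ^ 2 - ‖MFm v‖ ^ 2) :
    h ^ 2 * ‖grad v‖ ^ 2 + (1 / 2) * ‖MFp v‖ ^ 2 + (⟪v, MU v⟫_ℂ).re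
      ≤ ‖r‖ ^ 2 + (3 / 2) * ‖MFm v‖ ^ 2 :=
  stmt_7_general h grad MU MFp MFm MF v g r hsum hMFsym hr hAgmon
end

section
/- Let V, d : M → ℝ be continuous with V ≥ 0, d ≥ 0, and assume |d d(x)|² ≤ V(x) pointwise (eikonal inequality) and C₀⁻¹ ≤ V(x)/d(x) ≤ C₀ for some C₀ > 0 on a region. For B, h > 0 define Φ(x) = d(x) − Bh·log(d(x)/h) when d(x) > Bh and Φ(x) = d(x) − Bh·log B when d(x) ≤ Bh. Then V(x) − |dΦ(x)|² = 0 when d(x) ≤ Bh, and V(x) − |dΦ(x)|² ≥ Bh/C₀ when d(x) > Bh. -/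
/-! On `{d ≤ Bh}` the weight has the same differential as `d`, so the eikonal equality gives
`V = |dΦ|²`. On `{d > Bh}` put `t = Bh/d ∈ (0, 1)`; then `|dΦ|² = (1 - t)²|dd|² ≤ (1 - t)² V ≤ (1 - t) V`,
so `V - |dΦ|² ≥ t V = Bh · (V/d) ≥ Bh/C₀`. -/

theorem mul_le_sub_sq_one_sub_mul {t a V : ℝ} (ht₀ : 0 ≤ t) (ht₁ : t ≤ 1) (hV : 0 ≤ V)
    (ha : a ^ 2 ≤ V) : t * V ≤ V - ((1 - t) * a) ^ 2 := by
  have hsq : (1 - t) ^ 2 ≤ 1 - t := by nlinarith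
  calc t * V = V - (1 - t) * V := by ring
    _ ≤ V - (1 - t) ^ 2 * V := by gcongr
    _ ≤ V - (1 - t) ^ 2 * a ^ 2 := by gcongr
    _ = V - ((1 - t) * a) ^ 2 := by ring

theorem div_le_div_mul_of_inv_le_div {c C V d : ℝ} (hc : 0 ≤ c) (hVd : C⁻¹ ≤ V / d) :
    c / C ≤ c / d * V :=
  calc c / C = c * C⁻¹ := div_eq_mul_inv c C
    _ ≤ c * (V / d) := mul_le_mul_of_nonneg_left hVd hc
    _ = c / d * V := by ring

theorem stmt_8_general
    {M : Type*} (V d nd : M → ℝ) (B h C₀ : ℝ)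
    (hB : 0 < B) (hh : 0 < h)
    (hV : ∀ x, 0 ≤ V x)
    (heik : ∀ x, nd x ^ 2 ≤ V x)
    (heikeq : ∀ x, d x ≤ B * h → nd x ^ 2 = V x)
    (hcomp : ∀ x, B * h < d x → C₀⁻¹ ≤ V x / d x ∧ V x / d x ≤ C₀)
    (nΦ : M → ℝ)
    (hnΦ : ∀ x, nΦ x = if B * h < d x then (1 - B * h / d x) * nd x else nd x) :
    ∀ x, (d x ≤ B * h → V x - nΦ x ^ 2 = 0)
      ∧ (B * h < d x → B * h / C₀ ≤ V x - nΦ x ^ 2) := by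
  intro x
  have hBh : 0 < B * h := mul_pos hB hh
  refine ⟨fun hle => ?_, fun hlt => ?_⟩
  · rw [hnΦ x, if_neg (not_lt.mpr hle), heikeq x hle, sub_self]
  · have hdx : 0 < d x := hBh.trans hlt
    rw [hnΦ x, if_pos hlt]
    calc B * h / C₀ ≤ B * h / d x * V x := div_le_div_mul_of_inv_le_div hBh.le (hcomp x hlt).1
      _ ≤ V x - ((1 - B * h / d x) * nd x) ^ 2 :=
        mul_le_sub_sq_one_sub_mul (by positivity) ((div_le_one hdx).mpr hlt.le) (hV x) (heik x)

/-- **The weight `Φ = d − Bh·log(d/h)`.**  Let `V, d : M → ℝ` be nonnegative with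
`|dd(x)|² ≤ V(x)` (eikonal inequality, with equality where `d(x) ≤ Bh`, near the well),
and `C₀⁻¹ ≤ V(x)/d(x) ≤ C₀` where `d(x) > Bh`.  With
`Φ(x) = d(x) − Bh log(d(x)/h)` for `d(x) > Bh` and `Φ(x) = d(x) − Bh log B` otherwise,
one has `|dΦ| = (1 − Bh/d)|dd|` on `{d > Bh}` and `|dΦ| = |dd|` on `{d ≤ Bh}`; then
`V − |dΦ|² = 0` where `d(x) ≤ Bh`, and `V − |dΦ|² ≥ Bh/C₀` where `d(x) > Bh`.
Here `nd x` denotes `|dd(x)|` and `nΦ x` denotes `|dΦ(x)|`. -/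
theorem stmt_8
    {M : Type*} (V d nd : M → ℝ) (B h C₀ : ℝ)
    (hB : 0 < B) (hh : 0 < h) (hC₀ : 0 < C₀)
    (hV : ∀ x, 0 ≤ V x) (hd : ∀ x, 0 ≤ d x) (hnd : ∀ x, 0 ≤ nd x)
    (heik : ∀ x, nd x ^ 2 ≤ V x)
    (heikeq : ∀ x, d x ≤ B * h → nd x ^ 2 = V x)
    (hcomp : ∀ x, B * h < d x → C₀⁻¹ ≤ V x / d x ∧ V x / d x ≤ C₀)
    (nΦ : M → ℝ)
    (hnΦ : ∀ x, nΦ x = if B * h < d x then (1 - B * h / d x) * nd x else nd x) :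
    ∀ x, (d x ≤ B * h → V x - nΦ x ^ 2 = 0)
      ∧ (B * h < d x → B * h / C₀ ≤ V x - nΦ x ^ 2) :=
  stmt_8_general V d nd B h C₀ hB hh hV heik heikeq hcomp nΦ hnΦ
end

section
/- Let M = D + W be an N×N complex matrix with D = diag(μ_1,…,μ_N) real diagonal and let T be a self-adjoint N×N matrix such that w_{αβ} − conj(w_{βα}) = (μ_α − μ_β) t_{αβ} for all α, β. Then (1+T)^{1/2} M (1+T)^{−1/2} = D + (1/2)(W + W*) + R, where ‖R‖ = O(‖T‖·‖W‖ + ‖T‖²·‖D‖·‖T‖) in the regime where T and W are small; in particular the conjugated matrix is self-adjoint up to second-order errors. -/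
open scoped Matrix Matrix.Norms.L2Operator ComplexOrder

/-!
Write `S = 1 + A`. Then `A (1 + S) = T`, and positivity of `S` gives `‖(1 + S)⁻¹‖ ≤ 1`, so
`‖A‖ ≤ ‖T‖`; in particular `‖S⁻¹‖ ≤ 2`. Conjugation gives `S M S⁻¹ = M + [S, M] S⁻¹`, and the
hypothesis says `W − W* = [D, T] = −([S, D] S + S [S, D])`. Hence the error is
`[A, W] S⁻¹ + [S, D] (S⁻¹ − S) + ½ [[S, D], A]`, and every term is a product of two small
factors: `[S, D] = [A, D]` and `S⁻¹ − S = −S⁻¹ T`.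
-/

/-- Only `≤`: the norm of `1` vanishes in the zero ring, e.g. for matrices of size `0`. -/
theorem CStarRing.norm_one_le {E : Type*} [NormedRing E] [StarRing E] [CStarRing E] :
    ‖(1 : E)‖ ≤ 1 := by
  nontriviality E
  exact CStarRing.norm_one.le

section NormedRing

variable {R : Type*} [NormedRing R]

theorem norm_lie_le (a b : R) : ‖⁅a, b⁆‖ ≤ 2 * (‖a‖ * ‖b‖) := by
  rw [Ring.lie_def]
  calc ‖a * b - b * a‖ ≤ ‖a‖ * ‖b‖ + ‖b‖ * ‖a‖ :=
        (norm_sub_le _ _).trans (add_le_add (norm_mul_le _ _) (norm_mul_le _ _))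
    _ = 2 * (‖a‖ * ‖b‖) := by ring

theorem norm_le_two_of_mul_eq_one (h1 : ‖(1 : R)‖ ≤ 1) {s s' : R} (hs : s' * s = 1)
    (hs1 : ‖s - 1‖ ≤ 1 / 2) : ‖s'‖ ≤ 2 := by
  have hs' : s' = 1 - s' * (s - 1) := by rw [mul_sub, hs, mul_one, sub_sub_cancel]
  have : ‖s'‖ ≤ 1 + ‖s'‖ * (1 / 2) :=
    calc ‖s'‖ = ‖1 - s' * (s - 1)‖ := congrArg _ hs'
      _ ≤ ‖(1 : R)‖ + ‖s'‖ * ‖s - 1‖ :=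
          (norm_sub_le _ _).trans (add_le_add le_rfl (norm_mul_le _ _))
      _ ≤ 1 + ‖s'‖ * (1 / 2) := by gcongr
  linarith

end NormedRing

theorem symmetrization_error_eq {𝕜 R : Type*} [Field 𝕜] [CharZero 𝕜] [Ring R] [Algebra 𝕜 R]
    {s s' d w w' t : R} (hs : s * s' = 1) (hsT : s * s = 1 + t) (hw : w - w' = ⁅d, t⁆) :
    s * (d + w) * s' - (d + (1 / 2 : 𝕜) • (w + w')) =
      ⁅s - 1, w⁆ * s' + ⁅s, d⁆ * (s' - s) + (1 / 2 : 𝕜) • ⁅⁅s, d⁆, s - 1⁆ := by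
  have hconj : s * (d + w) * s' = ⁅s, d + w⁆ * s' + (d + w) := by
    rw [Ring.lie_def, sub_mul, mul_assoc (d + w), hs, mul_one, sub_add_cancel]
  have hT : t = s * s - 1 := by rw [hsT, add_sub_cancel_left]
  rw [hconj, show w' = w - ⁅d, t⁆ by rw [← hw, sub_sub_cancel], hT]
  simp only [Ring.lie_def, smul_sub, smul_add, mul_sub, sub_mul, mul_add, add_mul, mul_one,
    one_mul, mul_assoc]
  module

theorem norm_symmetrization_error_le {𝕜 R : Type*} [RCLike 𝕜] [NormedRing R] [NormedAlgebra 𝕜 R]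
    (h1 : ‖(1 : R)‖ ≤ 1) {s s' d w w' t : R} (hs : s * s' = 1) (hs' : s' * s = 1)
    (hsT : s * s = 1 + t) (hw : w - w' = ⁅d, t⁆) (hst : ‖s - 1‖ ≤ ‖t‖) (ht : ‖t‖ ≤ 1 / 2) :
    ‖s * (d + w) * s' - (d + (1 / 2 : 𝕜) • (w + w'))‖ ≤ 6 * (‖t‖ * ‖w‖ + ‖t‖ ^ 2 * ‖d‖) := by
  rw [symmetrization_error_eq hs hsT hw]
  have hs'_le : ‖s'‖ ≤ 2 := norm_le_two_of_mul_eq_one h1 hs' (hst.trans ht)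
  have hsd : ‖⁅s, d⁆‖ ≤ 2 * (‖t‖ * ‖d‖) := by
    rw [show ⁅s, d⁆ = ⁅s - 1, d⁆ by simp only [Ring.lie_def]; noncomm_ring]
    exact (norm_lie_le _ _).trans (by gcongr)
  have hs's : s' - s = -(s' * t) := by
    rw [← sub_eq_iff_eq_add'.mpr hsT, mul_sub, ← mul_assoc, hs', one_mul, mul_one, neg_sub]
  have hW : ‖⁅s - 1, w⁆ * s'‖ ≤ 4 * (‖t‖ * ‖w‖) :=
    calc ‖⁅s - 1, w⁆ * s'‖ ≤ 2 * (‖s - 1‖ * ‖w‖) * ‖s'‖ :=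
          (norm_mul_le _ _).trans (by gcongr; exact norm_lie_le _ _)
      _ ≤ 2 * (‖t‖ * ‖w‖) * 2 := by gcongr
      _ = 4 * (‖t‖ * ‖w‖) := by ring
  have hD : ‖⁅s, d⁆ * (s' - s)‖ ≤ 4 * (‖t‖ ^ 2 * ‖d‖) :=
    calc ‖⁅s, d⁆ * (s' - s)‖ ≤ ‖⁅s, d⁆‖ * (‖s'‖ * ‖t‖) := by
          rw [hs's, mul_neg, norm_neg]
          exact (norm_mul_le _ _).trans (by gcongr; exact norm_mul_le _ _)
      _ ≤ 2 * (‖t‖ * ‖d‖) * (2 * ‖t‖) := by gcongr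
      _ = 4 * (‖t‖ ^ 2 * ‖d‖) := by ring
  have hDD : ‖(1 / 2 : 𝕜) • ⁅⁅s, d⁆, s - 1⁆‖ ≤ 2 * (‖t‖ ^ 2 * ‖d‖) :=
    calc ‖(1 / 2 : 𝕜) • ⁅⁅s, d⁆, s - 1⁆‖ ≤ 1 / 2 * (2 * (‖⁅s, d⁆‖ * ‖s - 1‖)) := by
          rw [norm_smul, norm_div, norm_one, RCLike.norm_two]; gcongr; exact norm_lie_le _ _
      _ ≤ 1 / 2 * (2 * (2 * (‖t‖ * ‖d‖) * ‖t‖)) := by gcongr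
      _ = 2 * (‖t‖ ^ 2 * ‖d‖) := by ring
  calc _ ≤ ‖⁅s - 1, w⁆ * s'‖ + ‖⁅s, d⁆ * (s' - s)‖ + ‖(1 / 2 : 𝕜) • ⁅⁅s, d⁆, s - 1⁆‖ :=
        norm_add₃_le
    _ ≤ 6 * (‖t‖ * ‖w‖ + ‖t‖ ^ 2 * ‖d‖) := by
        nlinarith [mul_nonneg (norm_nonneg t) (norm_nonneg w)]

namespace Matrix

theorem sub_conjTranspose_eq_lie_diagonal {n R : Type*} [Fintype n] [DecidableEq n] [CommRing R]
    [StarRing R] {μ : n → R} {W T : Matrix n n R}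
    (h : ∀ α β, W α β - star (W β α) = (μ α - μ β) * T α β) : W - Wᴴ = ⁅diagonal μ, T⁆ := by
  ext α β
  rw [sub_apply, conjTranspose_apply, h, Ring.lie_def, sub_apply, diagonal_mul, mul_diagonal]
  ring

variable {𝕜 n : Type*} [RCLike 𝕜] [Fintype n] [DecidableEq n]

theorem PosSemidef.norm_le_norm_toEuclideanCLM_one_add {P : Matrix n n 𝕜} (hP : P.PosSemidef)
    (x : EuclideanSpace 𝕜 n) : ‖x‖ ≤ ‖toEuclideanCLM (n := n) (𝕜 := 𝕜) (1 + P) x‖ := by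
  set y := toEuclideanCLM (n := n) (𝕜 := 𝕜) (1 + P) x
  have hPx : 0 ≤ RCLike.re (inner 𝕜 x (toEuclideanCLM (n := n) (𝕜 := 𝕜) P x)) := by
    rw [EuclideanSpace.inner_eq_star_dotProduct, ofLp_toEuclideanCLM, dotProduct_comm]
    exact (RCLike.nonneg_iff.mp (hP.dotProduct_mulVec_nonneg _)).1
  have hxy : ‖x‖ ^ 2 ≤ ‖x‖ * ‖y‖ :=
    calc ‖x‖ ^ 2 ≤ RCLike.re (inner 𝕜 x y) := by
          rw [show y = x + toEuclideanCLM (n := n) (𝕜 := 𝕜) P x by simp [y], inner_add_right,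
            map_add, inner_self_eq_norm_sq]
          linarith
      _ ≤ ‖x‖ * ‖y‖ := re_inner_le_norm x y
  nlinarith [norm_nonneg x, norm_nonneg y]

theorem PosSemidef.norm_inv_one_add_le_one {P : Matrix n n 𝕜} (hP : P.PosSemidef) :
    ‖(1 + P)⁻¹‖ ≤ 1 := by
  have hinv : (1 + P) * (1 + P)⁻¹ = 1 :=
    mul_nonsing_inv _ ((isUnit_iff_isUnit_det _).mp (PosDef.one.add_posSemidef hP).isUnit)
  rw [cstar_norm_def]
  refine ContinuousLinearMap.opNorm_le_bound _ zero_le_one fun x => ?_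
  calc _ ≤ ‖toEuclideanCLM (n := n) (𝕜 := 𝕜) (1 + P)
          (toEuclideanCLM (n := n) (𝕜 := 𝕜) (1 + P)⁻¹ x)‖ :=
        hP.norm_le_norm_toEuclideanCLM_one_add _
    _ = 1 * ‖x‖ := by
        rw [← mul_apply_eq_comp, ← map_mul, hinv, map_one, one_apply_eq_self, one_mul]

theorem PosSemidef.norm_sub_one_le_norm_mul_self_sub_one {S : Matrix n n 𝕜} (hS : S.PosSemidef) :
    ‖S - 1‖ ≤ ‖S * S - 1‖ := by
  have hinv : (1 + S) * (1 + S)⁻¹ = 1 :=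
    mul_nonsing_inv _ ((isUnit_iff_isUnit_det _).mp (PosDef.one.add_posSemidef hS).isUnit)
  have hfactor : S - 1 = (S * S - 1) * (1 + S)⁻¹ := by
    rw [show S * S - 1 = (S - 1) * (1 + S) by noncomm_ring, mul_assoc, hinv, mul_one]
  rw [hfactor]
  exact (l2_opNorm_mul _ _).trans
    (mul_le_of_le_one_right (norm_nonneg _) hS.norm_inv_one_add_le_one)

end Matrix

/-- **Symmetrization of the interaction matrix.**  Let `M = D + W` with
`D = diag(μ_1, …, μ_N)` real diagonal, and let `T` be self-adjoint with
`w_{αβ} − conj(w_{βα}) = (μ_α − μ_β) t_{αβ}`.  Let `S = (1+T)^{1/2}` be the positive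
square root.  Then in the regime where `T` is small (`‖T‖ ≤ 1/2`),
`(1+T)^{1/2} M (1+T)^{−1/2} = D + ½(W + W*) + R` with
`‖R‖ ≤ C(‖T‖·‖W‖ + ‖T‖²·‖D‖)` for a constant `C` independent of the data; in particular
the conjugated matrix is self-adjoint up to second-order errors. -/
theorem stmt_10 (N : ℕ) :
    ∃ C > 0, ∀ (μ : Fin N → ℝ) (W T S : Matrix (Fin N) (Fin N) ℂ),
      T.IsHermitian → ‖T‖ ≤ 1 / 2 → S.PosDef → S * S = 1 + T →
      (∀ α β, W α β - star (W β α) = ((μ α : ℂ) - (μ β : ℂ)) * T α β) →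
      ‖S * (Matrix.diagonal (fun α => (μ α : ℂ)) + W) * S⁻¹
          - (Matrix.diagonal (fun α => (μ α : ℂ)) + (1 / 2 : ℂ) • (W + Wᴴ))‖
        ≤ C * (‖T‖ * ‖W‖ + ‖T‖ ^ 2 * ‖Matrix.diagonal (fun α => (μ α : ℂ))‖) := by
  refine ⟨6, by norm_num, fun μ W T S _ hT hS hST hWT => ?_⟩
  have hdet : IsUnit S.det := (Matrix.isUnit_iff_isUnit_det S).mp hS.isUnit
  have hS1 : ‖S - 1‖ ≤ ‖T‖ := by
    simpa [hST] using hS.posSemidef.norm_sub_one_le_norm_mul_self_sub_one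
  exact norm_symmetrization_error_le CStarRing.norm_one_le (S.mul_nonsing_inv hdet)
    (S.nonsing_inv_mul hdet) hST (Matrix.sub_conjTranspose_eq_lie_diagonal hWT) hS1 hT
end

section
/- Let (f_α) be finitely many vectors in a Hilbert space with Gram matrix G_f satisfying ‖G_f − 1‖ ≤ ε < 1, and let H be a bounded self-adjoint operator leaving span(f_α) invariant with H f⃗ = f⃗ M̂ for some matrix M̂ with ‖M̂‖ ≤ C. Then the matrix of H in the orthonormalized basis g⃗ := f⃗ G_f^{−1/2} is M̃ = G_f^{1/2} M̂ G_f^{−1/2}, and ‖M̃ − M̂‖ ≤ C' ε ‖M̂‖ for a constant C' depending only on ε₀ < 1 with ε ≤ ε₀. -/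
open scoped InnerProductSpace Matrix.Norms.L2Operator ComplexOrder MatrixOrder

/-!
With `g⃗ = f⃗ S⁻¹`, the relation `H f⃗ = f⃗ M̂` becomes `H g⃗ = f⃗ M̂ S⁻¹ = g⃗ (S M̂ S⁻¹)`.
For the bound, `S M̂ S⁻¹ - M̂ = (S - 1) M̂ S⁻¹ + M̂ S⁻¹ (1 - S)`, and the continuous functional
calculus controls `S` through its spectrum: each spectral value `x ≥ 0` of `S` satisfies
`|x² - 1| ≤ ‖G - 1‖ ≤ ε`, hence `|x - 1| ≤ ε` and `x ≥ √(1 - ε₀)`. So `‖S - 1‖ ≤ ε`,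
`‖S⁻¹‖ ≤ (1 - ε₀)^(-1/2)`, and `C' = 2 / √(1 - ε₀)` works.
-/

section CStarAlgebra

variable {A : Type*} [CStarAlgebra A] [PartialOrder A] [StarOrderedRing A] {a : A} {ε : ℝ}

lemma abs_sq_sub_one_le_of_mem_spectrum (ha : 0 ≤ a) (h : ‖a * a - 1‖ ≤ ε) {x : ℝ}
    (hx : x ∈ spectrum ℝ a) : |x ^ 2 - 1| ≤ ε := by
  have hcfc : cfc (fun y : ℝ => y ^ 2 - 1) a = a * a - 1 := by
    rw [cfc_sub .., cfc_pow_id a 2, cfc_const_one ℝ a, sq]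
  calc |x ^ 2 - 1| = ‖(fun y : ℝ => y ^ 2 - 1) x‖ := (Real.norm_eq_abs _).symm
    _ ≤ ‖cfc (fun y : ℝ => y ^ 2 - 1) a‖ := norm_apply_le_norm_cfc (fun y : ℝ => y ^ 2 - 1) a hx
    _ ≤ ε := hcfc ▸ h

lemma norm_sub_one_le_of_norm_mul_self_sub_one_le (ha : 0 ≤ a) (h : ‖a * a - 1‖ ≤ ε) :
    ‖a - 1‖ ≤ ε := by
  have hε : 0 ≤ ε := (norm_nonneg _).trans h
  rw [← cfc_id' ℝ a, ← cfc_const_one ℝ a, ← cfc_sub ..]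
  refine norm_cfc_le hε fun x hx => ?_
  have hx0 : 0 ≤ x := spectrum_nonneg_of_nonneg ha hx
  have hx2 := abs_sq_sub_one_le_of_mem_spectrum ha h hx
  -- `|x - 1| * (x + 1) = |x ^ 2 - 1|` and `x + 1 ≥ 1`
  rw [Real.norm_eq_abs, abs_le]
  rw [abs_le] at hx2
  constructor <;> nlinarith

lemma norm_ringInverse_le_of_norm_mul_self_sub_one_le (ha : 0 ≤ a) (hε : ε < 1)
    (h : ‖a * a - 1‖ ≤ ε) : ‖Ring.inverse a‖ ≤ (√(1 - ε))⁻¹ := by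
  have hlow : ∀ x ∈ spectrum ℝ a, √(1 - ε) ≤ x := fun x hx => by
    have hx2 := (abs_le.mp (abs_sq_sub_one_le_of_mem_spectrum ha h hx)).1
    exact Real.sqrt_le_iff.mpr ⟨spectrum_nonneg_of_nonneg ha hx, by linarith⟩
  have hpos : 0 < √(1 - ε) := Real.sqrt_pos.mpr (by linarith)
  have hunit : IsUnit a := (spectrum.zero_notMem_iff ℝ).mp fun h0 => (hlow 0 h0).not_gt hpos
  rw [← cfc_ringInverse_id (R := ℝ) a hunit]
  refine norm_cfc_le (by positivity) fun x hx => ?_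
  have hx := hlow x hx
  rw [Real.norm_eq_abs, abs_inv, abs_of_pos (hpos.trans_le hx)]
  exact inv_anti₀ hpos hx

end CStarAlgebra

lemma norm_mul_mul_sub_le {R : Type*} [NormedRing R] {s t : R} (hts : t * s = 1) (m : R) :
    ‖s * m * t - m‖ ≤ 2 * ‖t‖ * ‖s - 1‖ * ‖m‖ := by
  have hsplit : s * m * t - m = (s - 1) * m * t + m * t * (1 - s) := by
    rw [mul_sub, mul_one, mul_assoc m t s, hts, mul_one]; noncomm_ring
  calc ‖s * m * t - m‖ ≤ ‖s - 1‖ * ‖m‖ * ‖t‖ + ‖m‖ * ‖t‖ * ‖1 - s‖ := by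
        rw [hsplit]
        refine (norm_add_le _ _).trans (add_le_add ?_ ?_) <;>
          exact (norm_mul_le _ _).trans (by gcongr; exact norm_mul_le _ _)
    _ = 2 * ‖t‖ * ‖s - 1‖ * ‖m‖ := by rw [norm_sub_rev]; ring

section Frame

variable {R M N m n p : Type*} [AddCommMonoid M] [Fintype m]

-- `frameMul f T` is the paper's `f⃗ T`.
def frameMul [Semiring R] [Module R M] (f : m → M) (T : Matrix m n R) (β : n) : M :=
  ∑ k, T k β • f k

lemma frameMul_frameMul [Fintype n] [CommSemiring R] [Module R M] (f : m → M) (A : Matrix m n R)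
    (B : Matrix n p R) : frameMul (frameMul f A) B = frameMul f (A * B) := by
  ext γ
  simp only [frameMul, Matrix.mul_apply, Finset.smul_sum, smul_smul, Finset.sum_smul]
  rw [Finset.sum_comm]
  simp only [mul_comm]

lemma map_frameMul [Semiring R] [Module R M] [AddCommMonoid N] [Module R N] (L : M →ₗ[R] N)
    (f : m → M) (T : Matrix m n R) (β : n) : L (frameMul f T β) = frameMul (L ∘ f) T β := by
  simp only [frameMul, map_sum, map_smul, Function.comp_apply]

lemma map_frameMul_inv_eq_frameMul_conj [Fintype n] [DecidableEq n] [CommRing R] [Module R M]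
    (L : M →ₗ[R] M) {f : n → M} {A T : Matrix n n R} (hL : ∀ β, L (f β) = frameMul f A β)
    (hT : IsUnit T.det) (β : n) :
    L (frameMul f T⁻¹ β) = frameMul (frameMul f T⁻¹) (T * A * T⁻¹) β := by
  rw [map_frameMul, frameMul_frameMul, ← mul_assoc, ← mul_assoc, Matrix.nonsing_inv_mul T hT,
    one_mul, ← frameMul_frameMul, show L ∘ f = frameMul f A from funext hL]

end Frame

theorem stmt_17_general
    {H : Type*} [NormedAddCommGroup H] [InnerProductSpace ℂ H] [CompleteSpace H]
    (ε₀ : ℝ) (hε₁ : ε₀ < 1) (N : ℕ) :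
    ∃ C' > 0, ∀ (f : Fin N → H) (Hop : H →L[ℂ] H)
      (G Mhat S : Matrix (Fin N) (Fin N) ℂ) (ε C : ℝ),
      IsSelfAdjoint Hop →
      (∀ i j, ⟪f i, f j⟫_ℂ = G i j) →
      0 ≤ ε → ε ≤ ε₀ → ‖G - 1‖ ≤ ε → ‖Mhat‖ ≤ C →
      S.PosDef → S * S = G →
      (∀ β, Hop (f β) = ∑ α, Mhat α β • f α) →
      ((∀ β, Hop (∑ k, S⁻¹ k β • f k)
          = ∑ α, (S * Mhat * S⁻¹) α β • (∑ k, S⁻¹ k α • f k))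
        ∧ ‖S * Mhat * S⁻¹ - Mhat‖ ≤ C' * ε * ‖Mhat‖) := by
  have hgap : 0 < √(1 - ε₀) := Real.sqrt_pos.mpr (sub_pos.mpr hε₁)
  refine ⟨2 * (√(1 - ε₀))⁻¹, by positivity, ?_⟩
  intro f Hop G Mhat S ε C _ _ _ hεε₀ hGε _ hS hSG hHf
  have hS0 : 0 ≤ S := hS.posSemidef.nonneg
  have hSS : ‖S * S - 1‖ ≤ ε := hSG ▸ hGε
  have hdet : IsUnit S.det := hS.det_pos.ne'.isUnit
  refine ⟨map_frameMul_inv_eq_frameMul_conj (Hop : H →ₗ[ℂ] H) hHf hdet, ?_⟩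
  calc ‖S * Mhat * S⁻¹ - Mhat‖ ≤ 2 * ‖S⁻¹‖ * ‖S - 1‖ * ‖Mhat‖ :=
        norm_mul_mul_sub_le (Matrix.nonsing_inv_mul S hdet) Mhat
    _ ≤ 2 * (√(1 - ε₀))⁻¹ * ε * ‖Mhat‖ := by
        rw [Matrix.nonsing_inv_eq_ringInverse]
        gcongr
        · exact norm_ringInverse_le_of_norm_mul_self_sub_one_le hS0 hε₁ (hSS.trans hεε₀)
        · exact norm_sub_one_le_of_norm_mul_self_sub_one_le hS0 hSS

/-- **Matrix of a self-adjoint operator in the orthonormalized quasimode basis.**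
Let `f_1, …, f_N` be vectors with Gram matrix `G` satisfying `‖G − 1‖ ≤ ε ≤ ε₀ < 1`, and
let `H` be a bounded self-adjoint operator with `H f⃗ = f⃗ M̂` (i.e.
`H f_β = ∑_α M̂_{αβ} f_α`).  Let `S = G^{1/2}` be the positive square root.  Then the
matrix of `H` in the orthonormalized basis `g⃗ = f⃗ G^{−1/2}` is `M̃ = G^{1/2} M̂ G^{−1/2}`
(i.e. `H g_β = ∑_α M̃_{αβ} g_α`), and `‖M̃ − M̂‖ ≤ C'·ε·‖M̂‖` for a constant `C'`
depending only on `ε₀`. -/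
theorem stmt_17
    {H : Type*} [NormedAddCommGroup H] [InnerProductSpace ℂ H] [CompleteSpace H]
    (ε₀ : ℝ) (hε₀ : 0 ≤ ε₀) (hε₁ : ε₀ < 1) (N : ℕ) :
    ∃ C' > 0, ∀ (f : Fin N → H) (Hop : H →L[ℂ] H)
      (G Mhat S : Matrix (Fin N) (Fin N) ℂ) (ε C : ℝ),
      IsSelfAdjoint Hop →
      (∀ i j, ⟪f i, f j⟫_ℂ = G i j) →
      0 ≤ ε → ε ≤ ε₀ → ‖G - 1‖ ≤ ε → ‖Mhat‖ ≤ C →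
      S.PosDef → S * S = G →
      (∀ β, Hop (f β) = ∑ α, Mhat α β • f α) →
      ((∀ β, Hop (∑ k, S⁻¹ k β • f k)
          = ∑ α, (S * Mhat * S⁻¹) α β • (∑ k, S⁻¹ k α • f k))
        ∧ ‖S * Mhat * S⁻¹ - Mhat‖ ≤ C' * ε * ‖Mhat‖) :=
  stmt_17_general ε₀ hε₁ N
end
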